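/- The optimal partition s* = (c/2, (c/2)β) scales linearly in c: for any c > 0 and B with ∑Bᵢ = c·t for some normalization, (1/c)·argmax over 𝒟_c^{n+1} of U(s,B) equals (1/2, β/2) where β = B/‖B‖; i.e., the optimal fraction allocated to each component is independent of the total resource c. -/

import Mathlib

/-!
Each summand `B m / (B + m)` of `U` is concave in the matched amount `m = min (sᵢ₊₁) (βᵢ s₀)`,
so it lies below its tangent line at `m = B / 2`, namely `(B + 4 m) / 9`. Summing, `U s` is at
most `r ω (c + 4 ∑ m) / 9`, and `2 ∑ m ≤ s₀ + ∑ sᵢ₊₁ = c` because `∑ βᵢ = 1`; this gives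
`U s ≤ r ω c / 3`. At `s*` every `mᵢ = Bᵢ / 2` and the tangent bound is attained.
-/

open Finset

lemma mul_div_add_le_tangent {b m : ℝ} (hb : 0 < b) (hm : 0 ≤ m) :
    b * m / (b + m) ≤ (b + 4 * m) / 9 := by
  rw [div_le_div_iff₀ (by linarith) (by norm_num)]
  nlinarith [sq_nonneg (b - 2 * m)]

lemma sum_mul_div_add_le {ι : Type*} [Fintype ι] (b m : ι → ℝ) (hb : ∀ i, 0 < b i)
    (hm : ∀ i, 0 ≤ m i) :
    ∑ i, b i * m i / (b i + m i) ≤ (∑ i, b i + 4 * ∑ i, m i) / 9 := by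
  calc ∑ i, b i * m i / (b i + m i) ≤ ∑ i, (b i + 4 * m i) / 9 :=
        sum_le_sum fun i _ => mul_div_add_le_tangent (hb i) (hm i)
    _ = (∑ i, b i + 4 * ∑ i, m i) / 9 := by rw [← sum_div, sum_add_distrib, mul_sum]

lemma two_mul_sum_min_le {ι : Type*} [Fintype ι] (x w : ι → ℝ) (a : ℝ)
    (hw : ∑ i, w i = 1) :
    2 * ∑ i, min (x i) (w i * a) ≤ a + ∑ i, x i := by
  have h_le_a : ∑ i, min (x i) (w i * a) ≤ a :=
    calc ∑ i, min (x i) (w i * a) ≤ ∑ i, w i * a := sum_le_sum fun i _ => min_le_right _ _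
      _ = a := by rw [← sum_mul, hw, one_mul]
  have h_le_x : ∑ i, min (x i) (w i * a) ≤ ∑ i, x i := sum_le_sum fun i _ => min_le_left _ _
  linarith

theorem stmt8_general (n : ℕ) (B : Fin n → ℝ) (hB : ∀ i, 0 < B i)
    (r ω : ℝ) (hr : 0 < r) (hω : 0 < ω)
    (β : Fin n → ℝ) (hβ : β = fun i => B i / ∑ j, B j)
    (U : (Fin (n + 1) → ℝ) → ℝ)
    (hU : U = fun s => r * ω * ∑ i,
      B i * min (s i.succ) (β i * s 0) / (B i + min (s i.succ) (β i * s 0))) :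
    ∀ c : ℝ, 0 < c → (∑ i, B i) = c →
      ∀ sstar : Fin (n + 1) → ℝ,
        sstar = (fun j => if h : j = 0 then c / 2 else β (j.pred h) * c / 2) →
        (∀ s : Fin (n + 1) → ℝ, (∀ j, 0 ≤ s j) → ∑ j, s j = c → U s ≤ U sstar) ∧
        (∀ j : Fin (n + 1),
          sstar j / c = if h : j = 0 then (1 : ℝ) / 2 else β (j.pred h) / 2) := by
  intro c hc hBc sstar hsstar
  have hβB : ∀ i, β i * c = B i := fun i => by rw [hβ, hBc, div_mul_cancel₀ _ hc.ne']
  have hβ_pos : ∀ i, 0 < β i := fun i => by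
    simpa only [hβ, hBc] using div_pos (hB i) hc
  have hβsum : ∑ i, β i = 1 := by rw [hβ, ← sum_div, hBc, div_self hc.ne']
  have hsstar_zero : sstar 0 = c / 2 := by simp [hsstar]
  have hsstar_succ : ∀ i, sstar i.succ = B i / 2 := fun i => by
    simp [hsstar, Fin.succ_ne_zero, hβB]
  have hUstar : U sstar = r * ω * (c / 3) := by
    have hterm : ∀ i, B i * min (sstar i.succ) (β i * sstar 0) /
        (B i + min (sstar i.succ) (β i * sstar 0)) = B i / 3 := fun i => by
      rw [hsstar_zero, hsstar_succ, mul_div_assoc', hβB, min_self]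
      field_simp [(hB i).ne']
      ring
    simp only [hU, hterm, ← sum_div, hBc]
  refine ⟨fun s hs hsum => ?_, fun j => ?_⟩
  · rw [hUstar, hU]
    beta_reduce
    gcongr
    refine (sum_mul_div_add_le B _ hB fun i =>
      le_min (hs _) (mul_nonneg (hβ_pos i).le (hs 0))).trans ?_
    have h_matched := two_mul_sum_min_le (fun i => s i.succ) β (s 0) hβsum
    rw [hBc, ← hsum, Fin.sum_univ_succ]
    linarith
  · simp only [hsstar]
    split_ifs <;> field_simp

theorem stmt8 (n : ℕ) (hn : 1 ≤ n) (B : Fin n → ℝ) (hB : ∀ i, 0 < B i)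
    (r ω : ℝ) (hr : 0 < r) (hω : 0 < ω)
    (β : Fin n → ℝ) (hβ : β = fun i => B i / ∑ j, B j)
    (U : (Fin (n + 1) → ℝ) → ℝ)
    (hU : U = fun s => r * ω * ∑ i,
      B i * min (s i.succ) (β i * s 0) / (B i + min (s i.succ) (β i * s 0))) :
    ∀ c : ℝ, 0 < c → (∑ i, B i) = c →
      ∀ sstar : Fin (n + 1) → ℝ,
        sstar = (fun j => if h : j = 0 then c / 2 else β (j.pred h) * c / 2) →
        (∀ s : Fin (n + 1) → ℝ, (∀ j, 0 ≤ s j) → ∑ j, s j = c → U s ≤ U sstar) ∧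
        (∀ j : Fin (n + 1),
          sstar j / c = if h : j = 0 then (1 : ℝ) / 2 else β (j.pred h) / 2) :=
  stmt8_general n B hB r ω hr hω β hβ U hU
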